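/- arXiv:2207.02637 — 2 statements merged into one kernel-verified Lean document; each statement's English description precedes it below -/
import Mathlib

section
/- In the index-tracking product construction for GR(1) goals: given a trace α : ℕ → Set AP and predicates ψ_1..ψ_m, define the counter sequence ι : ℕ → Fin (m+1) by ι 0 = 0 and ι (n+1) = ι n + 1 (mod m+1) if ι n = 0 or ψ_{ι n} holds at α n, else ι (n+1) = ι n. Then ι takes value 0 infinitely often if and only if every ψ_l holds at infinitely many positions of α. -/
/-!
Between two consecutive resets the counter climbs through `1, …, m` one step at a time, and it
can only leave a value `l ≥ 1` at a position where `ψ l` holds; so infinitely many resets give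
infinitely many witnesses of every `ψ l`. Conversely, once the counter stops resetting it is
monotone in the finite order `Fin (m + 1)`, hence eventually stuck at some `l ≥ 1`, and then
`ψ l` can hold only finitely often.
-/

namespace Fin

theorem add_one_ne_self {m : ℕ} {v : Fin (m + 1)} (hv : v ≠ 0) : v + 1 ≠ v := by
  intro h
  have hm : m + 1 = 1 := Fin.one_eq_zero_iff.1 (add_eq_left.1 h)
  exact hv (Fin.ext (by have := v.isLt; omega))

theorem le_add_one_of_add_one_ne_zero {m : ℕ} {v : Fin (m + 1)} (hv : v + 1 ≠ 0) :
    v ≤ v + 1 := by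
  rcases eq_or_ne v (Fin.last m) with rfl | hlast
  · exact absurd (Fin.last_add_one m) hv
  · exact (Fin.lt_add_one_iff.2 (Fin.lt_last_iff_ne_last.2 hlast)).le

end Fin

def IsIndexCounter {AP : Type*} {m : ℕ} (α : ℕ → Set AP) (ψ : ℕ → Set AP → Prop)
    (ι : ℕ → Fin (m + 1)) : Prop :=
  ∀ t, ((ι t = 0 ∨ ψ (ι t : ℕ) (α t)) → ι (t + 1) = ι t + 1) ∧
    (¬(ι t = 0 ∨ ψ (ι t : ℕ) (α t)) → ι (t + 1) = ι t)

namespace IsIndexCounter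

variable {AP : Type*} {m : ℕ} {α : ℕ → Set AP} {ψ : ℕ → Set AP → Prop} {ι : ℕ → Fin (m + 1)}

theorem succ_ne_of_witness (h : IsIndexCounter α ψ ι) {t : ℕ} (h0 : ι t ≠ 0)
    (hψ : ψ (ι t : ℕ) (α t)) : ι (t + 1) ≠ ι t := by
  rw [(h t).1 (Or.inr hψ)]
  exact Fin.add_one_ne_self h0

theorem le_succ_of_succ_ne_zero (h : IsIndexCounter α ψ ι) {t : ℕ} (h0 : ι (t + 1) ≠ 0) :
    ι t ≤ ι (t + 1) := by
  by_cases hadv : ι t = 0 ∨ ψ (ι t : ℕ) (α t)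
  · rw [(h t).1 hadv] at h0 ⊢
    exact Fin.le_add_one_of_add_one_ne_zero h0
  · exact ((h t).2 hadv).ge

theorem witness_or_succ_le (h : IsIndexCounter α ψ ι) {l : ℕ} (hl : l ∈ Finset.Icc 1 m)
    {t : ℕ} (ht : (ι t : ℕ) ≤ l) : ψ l (α t) ∨ ((ι (t + 1) : ℕ) ≤ l ∧ ι (t + 1) ≠ 0) := by
  rw [Finset.mem_Icc] at hl
  by_cases hadv : ι t = 0 ∨ ψ (ι t : ℕ) (α t)
  · rcases ht.eq_or_lt with heq | hlt
    · have hne : ι t ≠ 0 := fun h0 => by rw [h0, Fin.val_zero] at heq; omega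
      exact Or.inl (heq ▸ hadv.resolve_left hne)
    · have hval : (ι (t + 1) : ℕ) = ι t + 1 := by
        rw [(h t).1 hadv, Fin.val_add_one_of_lt]
        rw [Fin.lt_def, Fin.val_last]
        omega
      exact Or.inr ⟨by omega, fun h0 => by rw [h0, Fin.val_zero] at hval; omega⟩
  · rw [(h t).2 hadv]
    exact Or.inr ⟨ht, (not_or.1 hadv).1⟩

theorem ne_zero_of_forall_not_witness (h : IsIndexCounter α ψ ι) {l : ℕ}
    (hl : l ∈ Finset.Icc 1 m) {a b : ℕ} (hab : a < b) (ha : (ι a : ℕ) ≤ l)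
    (hnot : ∀ u, a ≤ u → u < b → ¬ψ l (α u)) : ι b ≠ 0 := by
  suffices (ι b : ℕ) ≤ l ∧ ι b ≠ 0 from this.2
  induction b, hab using Nat.le_induction with
  | base => exact (h.witness_or_succ_le hl ha).resolve_left (hnot a le_rfl a.lt_succ_self)
  | succ b hab ih =>
    have hb := ih fun u hau hub => hnot u hau (by omega)
    exact (h.witness_or_succ_le hl hb.1).resolve_left (hnot b (by omega) b.lt_succ_self)

theorem exists_witness_between_resets (h : IsIndexCounter α ψ ι) {l : ℕ}
    (hl : l ∈ Finset.Icc 1 m) {a b : ℕ} (hab : a < b) (ha : ι a = 0) (hb : ι b = 0) :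
    ∃ u, a ≤ u ∧ u < b ∧ ψ l (α u) := by
  by_contra! hnot
  refine h.ne_zero_of_forall_not_witness hl hab ?_ hnot hb
  rw [ha, Fin.val_zero]
  exact Nat.zero_le l

theorem monotone_of_forall_ne_zero (h : IsIndexCounter α ψ ι) {N : ℕ}
    (hN : ∀ t, N ≤ t → ι t ≠ 0) : Monotone fun n => ι (N + n) :=
  monotone_nat_of_le_succ fun n => h.le_succ_of_succ_ne_zero (hN (N + n + 1) (by omega))

theorem exists_stuck_of_forall_ne_zero (h : IsIndexCounter α ψ ι) {N : ℕ}
    (hN : ∀ t, N ≤ t → ι t ≠ 0) : ∃ T, N ≤ T ∧ ∀ t, T ≤ t → ι t = ι T := by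
  obtain ⟨n₀, hn₀⟩ := WellFoundedGT.monotone_chain_condition
    ⟨fun n => ι (N + n), h.monotone_of_forall_ne_zero hN⟩
  refine ⟨N + n₀, Nat.le_add_right N n₀, fun t ht => ?_⟩
  obtain ⟨n, rfl⟩ := Nat.exists_eq_add_of_le ht
  rw [add_assoc]
  exact (hn₀ (n₀ + n) (Nat.le_add_right n₀ n)).symm

end IsIndexCounter

theorem counter_resets_iff_all_GF_general {AP : Type*} (m : ℕ) (α : ℕ → Set AP)
    (ψ : ℕ → Set AP → Prop) (ι : ℕ → Fin (m + 1))
    (hstep : ∀ t, ((ι t = 0 ∨ ψ (ι t : ℕ) (α t)) → ι (t + 1) = ι t + 1) ∧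
      (¬(ι t = 0 ∨ ψ (ι t : ℕ) (α t)) → ι (t + 1) = ι t)) :
    {t | ι t = 0}.Infinite ↔ ∀ l ∈ Finset.Icc 1 m, {t | ψ l (α t)}.Infinite := by
  have h : IsIndexCounter α ψ ι := hstep
  constructor
  · intro hzero l hl
    refine Set.infinite_of_forall_exists_gt fun N => ?_
    obtain ⟨a, ha, hNa⟩ := hzero.exists_gt N
    obtain ⟨b, hb, hab⟩ := hzero.exists_gt a
    obtain ⟨u, hau, -, hu⟩ := h.exists_witness_between_resets hl hab ha hb
    exact ⟨u, hu, hNa.trans_le hau⟩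
  · intro hψ
    by_contra hfin
    obtain ⟨N, hN⟩ := (Set.not_infinite.1 hfin).bddAbove
    have hne : ∀ t, N + 1 ≤ t → ι t ≠ 0 := fun t ht h0 => by have := hN h0; omega
    obtain ⟨T, hNT, hT⟩ := h.exists_stuck_of_forall_ne_zero hne
    have hT0 : ι T ≠ 0 := hne T hNT
    have hl : (ι T : ℕ) ∈ Finset.Icc 1 m :=
      Finset.mem_Icc.2 ⟨Nat.one_le_iff_ne_zero.2 (Fin.val_ne_zero_iff.2 hT0), Fin.is_le _⟩
    obtain ⟨s, hs, hTs⟩ := (hψ _ hl).exists_gt T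
    have hsT : ι s = ι T := hT s hTs.le
    refine h.succ_ne_of_witness (hsT ▸ hT0) (hsT ▸ hs) ?_
    rw [hsT, hT (s + 1) (by omega)]

/-- Correctness of the index-tracking counter for a conjunction of GF conditions:
the counter `ι` (cycling through `0, 1, ..., m` modulo `m + 1`, advancing from `0`
unconditionally and from `l ≥ 1` exactly when `ψ_l` holds at the current position)
resets to `0` infinitely often iff every `ψ_l` (`1 ≤ l ≤ m`) holds at infinitely many
positions of the trace `α`. -/
theorem counter_resets_iff_all_GF {AP : Type*} (m : ℕ) (hm : 1 ≤ m) (α : ℕ → Set AP)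
    (ψ : ℕ → Set AP → Prop) (ι : ℕ → Fin (m + 1)) (h0 : ι 0 = 0)
    (hstep : ∀ t, ((ι t = 0 ∨ ψ (ι t : ℕ) (α t)) → ι (t + 1) = ι t + 1) ∧
      (¬(ι t = 0 ∨ ψ (ι t : ℕ) (α t)) → ι (t + 1) = ι t)) :
    {t | ι t = 0}.Infinite ↔ ∀ l ∈ Finset.Icc 1 m, {t | ψ l (α t)}.Infinite :=
  counter_resets_iff_all_GF_general m α ψ ι hstep
end

section
/- Correctness of the cycle linear program for a single weight function: in a finite directed graph with weight w : V → ℤ, there exists a function x : E → ℕ with ∑_e x_e ≥ 1, flow conservation at every vertex (∑_{e out of v} x_e = ∑_{e into v} x_e), and ∑_e w(src e) * x_e ≥ 0, if and only if the graph contains a cycle whose total weight (sum of w over the cycle's vertices, with multiplicity) is nonnegative. -/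
/-!
The edge multiplicities of a closed walk form a circulation with the same weight as the walk.
Conversely, in a nonzero `ℕ`-valued circulation every edge of the support can be continued by a
support edge leaving its target (by conservation), so iterating a choice of such continuations
on the finite support produces a periodic orbit, i.e. a closed walk using each edge at most once.
If that walk has negative weight, removing it leaves a nonzero circulation of smaller total flow
and larger weight, and induction on the total flow finishes the proof.
-/

open Finset Function

theorem Function.exists_mem_periodicPts {α : Type*} [Finite α] [Nonempty α] (f : α → α) :
    ∃ x, x ∈ periodicPts f := by
  obtain ⟨x⟩ := ‹Nonempty α›
  obtain ⟨m, n, heq, hne⟩ : ∃ m n, f^[m] x = f^[n] x ∧ m ≠ n := by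
    simpa [Injective] using not_injective_infinite_finite (f^[·] x)
  wlog hlt : m < n generalizing m n
  · exact this n m heq.symm hne.symm (by omega)
  refine ⟨f^[m] x, mk_mem_periodicPts (Nat.sub_pos_of_lt hlt) ?_⟩
  rw [IsPeriodicPt, IsFixedPt, ← iterate_add_apply, Nat.sub_add_cancel hlt.le, heq]

theorem val_finRotate {k : ℕ} (j : Fin k) : (finRotate k j : ℕ) = (j + 1) % k := by
  obtain _ | n := k
  · exact j.elim0
  · simp [Fin.val_add]

section Circulation

variable {V E : Type*} (src trg : E → V)

def IsClosedWalk {k : ℕ} (c : Fin k → E) : Prop :=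
  ∀ j, trg (c j) = src (c (finRotate k j))

theorem isClosedWalk_iff {k : ℕ} (hk : 0 < k) (c : Fin k → E) :
    IsClosedWalk src trg c ↔
      ∀ j : Fin k, trg (c j) = src (c ⟨((j : ℕ) + 1) % k, Nat.mod_lt _ hk⟩) := by
  have hrot : ∀ j : Fin k, finRotate k j = ⟨((j : ℕ) + 1) % k, Nat.mod_lt _ hk⟩ :=
    fun j => Fin.ext (val_finRotate j)
  simp only [IsClosedWalk, hrot]

section EdgeCount

variable {ι : Type*} [Fintype ι] [DecidableEq E]

def edgeCount (c : ι → E) (e : E) : ℕ := #{j | c j = e}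

theorem edgeCount_le_of_injective {c : ι → E} (hc : Injective c) {x : E → ℕ}
    (hx : ∀ j, x (c j) ≠ 0) : edgeCount c ≤ x := by
  intro e
  by_cases he : ∃ j, c j = e
  · obtain ⟨j, rfl⟩ := he
    have hle : edgeCount c (c j) ≤ 1 :=
      card_le_one.mpr fun a ha b hb => hc ((mem_filter.mp ha).2.trans (mem_filter.mp hb).2.symm)
    exact hle.trans (Nat.one_le_iff_ne_zero.mpr (hx j))
  · simp [edgeCount, not_exists.mp he]

variable [Fintype E]

theorem sum_mul_edgeCount {R : Type*} [NonAssocSemiring R] (c : ι → E) (f : E → R) :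
    ∑ e, f e * (edgeCount c e : R) = ∑ j, f (c j) := by
  rw [← sum_fiberwise' univ c f]
  refine sum_congr rfl fun e _ => ?_
  simpa [edgeCount] using (Nat.cast_comm _ _).symm

theorem sum_filter_edgeCount (c : ι → E) (p : E → Prop) [DecidablePred p] :
    ∑ e with p e, edgeCount c e = #{j | p (c j)} := by
  simp [edgeCount, sum_card_fiberwise_eq_card_filter]

theorem sum_edgeCount (c : ι → E) : ∑ e, edgeCount c e = Fintype.card ι := by
  simpa using sum_filter_edgeCount c (fun _ => True)

end EdgeCount

variable [Fintype E] [DecidableEq V]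

def IsCirculation {M : Type*} [AddCommMonoid M] (x : E → M) : Prop :=
  ∀ v, ∑ e with src e = v, x e = ∑ e with trg e = v, x e

theorem isCirculation_edgeCount [DecidableEq E] {k : ℕ} {c : Fin k → E}
    (hc : IsClosedWalk src trg c) : IsCirculation src trg (edgeCount c) := by
  intro v
  have hc' : ∀ j, trg (c j) = src (c (finRotate k j)) := hc
  simp only [sum_filter_edgeCount, card_filter, hc']
  exact (Equiv.sum_comp (finRotate k) fun j => if src (c j) = v then 1 else 0).symm

variable {src trg}

theorem IsCirculation.of_add_right {M : Type*} [AddCancelCommMonoid M] {x y : E → M}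
    (hxy : IsCirculation src trg (x + y)) (hy : IsCirculation src trg y) :
    IsCirculation src trg x := fun v => by
  have h := hxy v
  simp only [Pi.add_apply, sum_add_distrib, hy v] at h
  exact add_right_cancel h

theorem IsCirculation.exists_out_edge {x : E → ℕ} (hx : IsCirculation src trg x) {e : E}
    (he : x e ≠ 0) : ∃ e', src e' = trg e ∧ x e' ≠ 0 := by
  have hin : ∑ e' with src e' = trg e, x e' ≠ 0 := by
    rw [hx, Ne, sum_eq_zero_iff, not_forall]
    exact ⟨e, by simpa using he⟩
  obtain ⟨e', he', hxe'⟩ := exists_ne_zero_of_sum_ne_zero hin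
  exact ⟨e', (mem_filter.mp he').2, hxe'⟩

theorem IsCirculation.exists_injective_closedWalk {x : E → ℕ} (hx : IsCirculation src trg x)
    (h0 : x ≠ 0) :
    ∃ (k : ℕ) (c : Fin k → E), 0 < k ∧ IsClosedWalk src trg c ∧ Injective c ∧
      ∀ j, x (c j) ≠ 0 := by
  obtain ⟨e₀, he₀⟩ := Function.ne_iff.mp h0
  have : Nonempty {e // x e ≠ 0} := ⟨⟨e₀, he₀⟩⟩
  choose next hnext using fun e : {e // x e ≠ 0} => hx.exists_out_edge e.2
  let F : {e // x e ≠ 0} → {e // x e ≠ 0} := fun e => ⟨next e, (hnext e).2⟩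
  obtain ⟨p, hp⟩ := exists_mem_periodicPts F
  refine ⟨minimalPeriod F p, fun j => (F^[j] p).1, minimalPeriod_pos_of_mem_periodicPts hp,
    fun j => ?_, fun i j hij => ?_, fun j => (F^[j] p).2⟩
  · have hrot : F^[finRotate _ j] p = F (F^[j] p) := by
      rw [← iterate_succ_apply' F, val_finRotate, iterate_mod_minimalPeriod_eq]
    simp only [hrot]
    exact (hnext _).1.symm
  · exact Fin.ext (iterate_injOn_Iio_minimalPeriod i.2 j.2 (Subtype.ext hij))

theorem IsCirculation.exists_closedWalk_weight_nonneg (w : V → ℤ) {x : E → ℕ}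
    (hx : IsCirculation src trg x) (h0 : x ≠ 0) (hw : 0 ≤ ∑ e, w (src e) * (x e : ℤ)) :
    ∃ (k : ℕ) (c : Fin k → E), 0 < k ∧ IsClosedWalk src trg c ∧ 0 ≤ ∑ j, w (src (c j)) := by
  classical
  induction hn : ∑ e, x e using Nat.strong_induction_on generalizing x with
  | _ n ih =>
  obtain ⟨k, c, hk, hc, hinj, hsupp⟩ := hx.exists_injective_closedWalk h0
  by_cases hwc : 0 ≤ ∑ j, w (src (c j))
  · exact ⟨k, c, hk, hc, hwc⟩
  have hsplit : x - edgeCount c + edgeCount c = x :=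
    tsub_add_cancel_of_le (edgeCount_le_of_injective hinj hsupp)
  have hcirc : IsCirculation src trg (x - edgeCount c) :=
    (hsplit ▸ hx).of_add_right (isCirculation_edgeCount src trg hc)
  have hweight : ∑ e, w (src e) * (x e : ℤ) =
      ∑ e, w (src e) * ((x - edgeCount c) e : ℤ) + ∑ j, w (src (c j)) := by
    rw [← sum_mul_edgeCount c (fun e => w (src e)), ← sum_add_distrib]
    refine sum_congr rfl fun e _ => ?_
    conv_lhs => rw [← hsplit]
    simp only [Pi.add_apply, Nat.cast_add]
    ring
  have hpos : 0 < ∑ e, w (src e) * ((x - edgeCount c) e : ℤ) := by linarith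
  have hne : x - edgeCount c ≠ 0 := by
    rintro h
    rw [h] at hpos
    simp at hpos
  have hlt : ∑ e, (x - edgeCount c) e < n := by
    have htotal := congrArg (∑ e, · e) hsplit
    simp only [Pi.add_apply, sum_add_distrib, sum_edgeCount, Fintype.card_fin] at htotal
    omega
  exact ih _ hlt hcirc hne hpos.le rfl

end Circulation

theorem cycleLP_correct_general {V E : Type*} [Fintype E] [DecidableEq V]
    (src trg : E → V) (w : V → ℤ) :
    (∃ x : E → ℕ,
        1 ≤ ∑ e, x e ∧
        (∀ v, ∑ e ∈ Finset.univ.filter (fun e => src e = v), x e =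
          ∑ e ∈ Finset.univ.filter (fun e => trg e = v), x e) ∧
        0 ≤ ∑ e, w (src e) * (x e : ℤ)) ↔
      (∃ (k : ℕ) (hk : 0 < k) (c : Fin k → E),
        (∀ j : Fin k, trg (c j) = src (c ⟨((j : ℕ) + 1) % k, Nat.mod_lt _ hk⟩)) ∧
        0 ≤ ∑ j : Fin k, w (src (c j))) := by
  classical
  constructor
  · rintro ⟨x, hpos, hcirc : IsCirculation src trg x, hw⟩
    have hx : x ≠ 0 := by
      rintro rfl
      simp at hpos
    obtain ⟨k, c, hk, hc, hwc⟩ := hcirc.exists_closedWalk_weight_nonneg w hx hw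
    exact ⟨k, hk, c, (isClosedWalk_iff src trg hk c).1 hc, hwc⟩
  · rintro ⟨k, hk, c, hc, hwc⟩
    rw [← isClosedWalk_iff src trg hk] at hc
    refine ⟨edgeCount c, ?_, isCirculation_edgeCount src trg hc, ?_⟩
    · rw [sum_edgeCount, Fintype.card_fin]
      exact hk
    · rwa [sum_mul_edgeCount c (fun e => w (src e))]

/-- Correctness of the cycle linear program: in a finite directed graph with vertex
weights `w`, there is a nonzero circulation `x : E → ℕ` (flow conservation at every
vertex) with nonnegative total weighted sum iff the graph contains a cycle whose total
weight is nonnegative. -/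
theorem cycleLP_correct {V E : Type*} [Fintype V] [Fintype E] [DecidableEq V]
    (src trg : E → V) (w : V → ℤ) :
    (∃ x : E → ℕ,
        1 ≤ ∑ e, x e ∧
        (∀ v, ∑ e ∈ Finset.univ.filter (fun e => src e = v), x e =
          ∑ e ∈ Finset.univ.filter (fun e => trg e = v), x e) ∧
        0 ≤ ∑ e, w (src e) * (x e : ℤ)) ↔
      (∃ (k : ℕ) (hk : 0 < k) (c : Fin k → E),
        (∀ j : Fin k, trg (c j) = src (c ⟨((j : ℕ) + 1) % k, Nat.mod_lt _ hk⟩)) ∧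
        0 ≤ ∑ j : Fin k, w (src (c j))) :=
  cycleLP_correct_general src trg w
end
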